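/- Let μ > 0, κ > 0, k > 0 and k̂ > 1/8. The Cauchy-stress map σ_eH : Sym(3) → Sym(3) defined by σ_eH(X) = 2μ·exp(k‖dev₃ X‖² − tr X)·dev₃ X + κ·exp(k̂(tr X)² − tr X)·tr(X)·1 is a bijection of Sym(3) onto Sym(3). -/

import Mathlib

open Matrix Real

/-- The deviatoric (trace-free) part of a 3×3 matrix: `dev₃ X = X − (tr X/3)·1`. -/
noncomputable def dev3 (X : Matrix (Fin 3) (Fin 3) ℝ) : Matrix (Fin 3) (Fin 3) ℝ :=
  X - (X.trace / 3) • (1 : Matrix (Fin 3) (Fin 3) ℝ)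

/-- The Frobenius inner product `⟨A, B⟩ = tr(A Bᵀ)`. -/
noncomputable def minner (A B : Matrix (Fin 3) (Fin 3) ℝ) : ℝ := (A * Bᵀ).trace

/-- The Cauchy stress of the exponentiated Hencky energy as a function of the
logarithmic strain `X = log V`:
`σ_eH(X) = 2μ·e^{k‖dev₃X‖² − trX}·dev₃X + κ·e^{k̂(trX)² − trX}·tr(X)·1`. -/
noncomputable def sigmaEH (μ κ k khat : ℝ) (X : Matrix (Fin 3) (Fin 3) ℝ) :
    Matrix (Fin 3) (Fin 3) ℝ :=
  (2 * μ * Real.exp (k * minner (dev3 X) (dev3 X) - X.trace)) • dev3 X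
    + (κ * Real.exp (khat * X.trace ^ 2 - X.trace) * X.trace) •
        (1 : Matrix (Fin 3) (Fin 3) ℝ)

/-!
Splitting `X = dev₃ X + (tr X / 3)·1`, the trace of `σ_eH(X)` depends only on `t = tr X`,
through `t ↦ 3κ e^{k̂t² − t} t`, and its deviator is the radial map
`D ↦ 2μ e^{k‖D‖² − t} D` applied to `dev₃ X`. Both scalar profiles have the form
`x ↦ a e^{bx² + cx} x`, whose derivative `a e^{bx² + cx} (2bx² + cx + 1)` is positive
everywhere once `c² < 8b`; for the trace `c = −1`, which is where `k̂ > 1/8` comes from.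
A radial map `v ↦ f(‖v‖) v` with strictly increasing, surjective `r ↦ f(r) r` is a
bijection whose inverse sends `w` to a multiple of `w`, so it preserves symmetry.
-/

open Filter Function
open scoped Matrix.Norms.Frobenius

noncomputable def expQuadMul (a b c x : ℝ) : ℝ := a * exp (b * x ^ 2 + c * x) * x

section ExpQuadMul

variable {a b c : ℝ}

theorem hasDerivAt_expQuadMul (a b c x : ℝ) :
    HasDerivAt (expQuadMul a b c)
      (a * exp (b * x ^ 2 + c * x) * (2 * b * x ^ 2 + c * x + 1)) x := by
  have h := ((((hasDerivAt_pow 2 x).const_mul b).add ((hasDerivAt_id' x).const_mul c)).exp.mul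
    (hasDerivAt_id' x)).const_mul a
  refine (h.congr_deriv ?_).congr_of_eventuallyEq (.of_forall fun y => ?_)
  · simp only [Pi.add_apply]; push_cast; ring
  · simp only [expQuadMul, Pi.add_apply, Pi.mul_apply]; ring

theorem strictMono_expQuadMul (ha : 0 < a) (hc : c ^ 2 < 8 * b) :
    StrictMono (expQuadMul a b c) := by
  refine strictMono_of_deriv_pos fun x => ?_
  rw [(hasDerivAt_expQuadMul a b c x).deriv]
  have hb : 0 < b := by nlinarith [sq_nonneg c]
  have hquad : 0 < 2 * b * x ^ 2 + c * x + 1 := by nlinarith [sq_nonneg (4 * b * x + c)]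
  positivity

/-- Beyond `x = -c/b` the exponent `bx² + cx` is nonnegative, so the map dominates `x ↦ a x`. -/
theorem tendsto_expQuadMul_atTop (ha : 0 < a) (hb : 0 < b) :
    Tendsto (expQuadMul a b c) atTop atTop := by
  refine tendsto_atTop_mono' atTop ?_ (tendsto_id.const_mul_atTop ha)
  filter_upwards [eventually_ge_atTop 0, eventually_ge_atTop (-c / b)] with x hx0 hxc
  have hexp : 1 ≤ exp (b * x ^ 2 + c * x) :=
    one_le_exp (by nlinarith [(div_le_iff₀ hb).mp hxc])
  simp only [expQuadMul, id]
  nlinarith [mul_nonneg (mul_nonneg ha.le hx0) (sub_nonneg.mpr hexp)]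

theorem tendsto_expQuadMul_atBot (ha : 0 < a) (hb : 0 < b) :
    Tendsto (expQuadMul a b c) atBot atBot := by
  refine tendsto_atBot_mono' atBot ?_ (tendsto_id.const_mul_atBot ha)
  filter_upwards [eventually_le_atBot 0, eventually_le_atBot (-c / b)] with x hx0 hxc
  have hexp : 1 ≤ exp (b * x ^ 2 + c * x) :=
    one_le_exp (by nlinarith [(le_div_iff₀ hb).mp hxc])
  simp only [expQuadMul, id]
  nlinarith [mul_nonneg (mul_nonneg ha.le (neg_nonneg.mpr hx0)) (sub_nonneg.mpr hexp)]

theorem surjective_expQuadMul (ha : 0 < a) (hb : 0 < b) : Surjective (expQuadMul a b c) :=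
  (by unfold expQuadMul; fun_prop : Continuous (expQuadMul a b c)).surjective
    (tendsto_expQuadMul_atTop ha hb) (tendsto_expQuadMul_atBot ha hb)

end ExpQuadMul

section Radial

variable {E : Type*} [NormedAddCommGroup E] [NormedSpace ℝ E] {f : ℝ → ℝ}

noncomputable def radialMap (f : ℝ → ℝ) (v : E) : E := f ‖v‖ • v

theorem norm_radialMap (hf : Monotone fun r => f r * r) (v : E) :
    ‖radialMap f v‖ = f ‖v‖ * ‖v‖ := by
  have h0 : 0 ≤ f ‖v‖ * ‖v‖ := by simpa using hf (norm_nonneg v)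
  rw [radialMap, norm_smul, norm_eq_abs, ← abs_of_nonneg (norm_nonneg v), ← abs_mul,
    abs_of_nonneg (norm_nonneg v), abs_of_nonneg h0]

theorem radialMap_injective (hf : StrictMono fun r => f r * r) :
    Injective (radialMap f : E → E) := by
  intro v w hvw
  have hnorm : ‖v‖ = ‖w‖ := hf.injective <| by
    simpa only [norm_radialMap hf.monotone] using congrArg norm hvw
  rcases (norm_nonneg v).eq_or_lt with hv | hv
  · rw [eq_comm, norm_eq_zero] at hv
    rw [hv, eq_comm, ← norm_eq_zero, ← hnorm, hv, norm_zero]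
  · have hfv : f ‖v‖ ≠ 0 := fun h => by simpa [h] using hf hv
    rw [radialMap, radialMap, ← hnorm] at hvw
    exact smul_right_injective E hfv hvw

theorem exists_radialMap_smul_eq (hf : StrictMono fun r => f r * r)
    (hs : Surjective fun r => f r * r) (w : E) : ∃ c : ℝ, radialMap f (c • w) = w := by
  obtain ⟨r, hr⟩ := hs ‖w‖
  have hr0 : 0 ≤ r := hf.le_iff_le.mp (by simp [hr])
  refine ⟨r / ‖w‖, ?_⟩
  rcases eq_or_ne w 0 with rfl | hw
  · simp [radialMap]
  · have hw' : ‖w‖ ≠ 0 := norm_ne_zero_iff.mpr hw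
    have hnorm : ‖(r / ‖w‖) • w‖ = r := by
      rw [norm_smul, norm_div, norm_norm, Real.norm_of_nonneg hr0, div_mul_cancel₀ _ hw']
    rw [radialMap, hnorm, smul_smul, ← mul_div_assoc, (show f r * r = ‖w‖ from hr),
      div_self hw', one_smul]

end Radial

section Deviator

variable {X D : Matrix (Fin 3) (Fin 3) ℝ}

theorem minner_self_eq_norm_sq (A : Matrix (Fin 3) (Fin 3) ℝ) : minner A A = ‖A‖ ^ 2 := by
  rw [frobenius_norm_def, ← sqrt_eq_rpow, sq_sqrt (by positivity)]
  simp [minner, Matrix.trace, Matrix.mul_apply, sq]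

theorem trace_dev3 (X : Matrix (Fin 3) (Fin 3) ℝ) : (dev3 X).trace = 0 := by
  simp [dev3, trace_sub, trace_smul, trace_one]

theorem dev3_add_trace_smul_one (X : Matrix (Fin 3) (Fin 3) ℝ) :
    dev3 X + (X.trace / 3) • (1 : Matrix (Fin 3) (Fin 3) ℝ) = X := by
  simp [dev3]

theorem trace_add_smul_one (hD : D.trace = 0) (s : ℝ) :
    (D + s • (1 : Matrix (Fin 3) (Fin 3) ℝ)).trace = 3 * s := by
  simp [trace_add, trace_smul, trace_one, hD, mul_comm]

theorem dev3_add_smul_one (hD : D.trace = 0) (s : ℝ) :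
    dev3 (D + s • (1 : Matrix (Fin 3) (Fin 3) ℝ)) = D := by
  rw [dev3, trace_add_smul_one hD, mul_div_cancel_left₀ _ three_ne_zero, add_sub_cancel_right]

theorem Matrix.IsSymm.dev3 (hX : X.IsSymm) : (dev3 X).IsSymm :=
  hX.sub (isSymm_one.smul _)

end Deviator

noncomputable def devProfile (μ k t r : ℝ) : ℝ := 2 * μ * exp (k * r ^ 2 - t)

theorem devProfile_mul_eq_expQuadMul (μ k t : ℝ) :
    (fun r => devProfile μ k t r * r) = expQuadMul (2 * μ * exp (-t)) k 0 := by
  ext r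
  simp only [devProfile, expQuadMul, zero_mul, add_zero, sub_eq_add_neg, exp_add]
  ring

theorem sigmaEH_eq_radialMap (μ κ k khat : ℝ) (X : Matrix (Fin 3) (Fin 3) ℝ) :
    sigmaEH μ κ k khat X = radialMap (devProfile μ k X.trace) (dev3 X)
      + expQuadMul κ khat (-1) X.trace • (1 : Matrix (Fin 3) (Fin 3) ℝ) := by
  simp only [sigmaEH, radialMap, devProfile, expQuadMul, minner_self_eq_norm_sq, neg_one_mul,
    ← sub_eq_add_neg]

theorem trace_radialMap_dev3 (f : ℝ → ℝ) (X : Matrix (Fin 3) (Fin 3) ℝ) :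
    (radialMap f (dev3 X)).trace = 0 := by
  rw [radialMap, trace_smul, trace_dev3, smul_zero]

theorem trace_sigmaEH (μ κ k khat : ℝ) (X : Matrix (Fin 3) (Fin 3) ℝ) :
    (sigmaEH μ κ k khat X).trace = 3 * expQuadMul κ khat (-1) X.trace := by
  rw [sigmaEH_eq_radialMap, trace_add_smul_one (trace_radialMap_dev3 _ _)]

theorem dev3_sigmaEH (μ κ k khat : ℝ) (X : Matrix (Fin 3) (Fin 3) ℝ) :
    dev3 (sigmaEH μ κ k khat X) = radialMap (devProfile μ k X.trace) (dev3 X) := by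
  rw [sigmaEH_eq_radialMap, dev3_add_smul_one (trace_radialMap_dev3 _ _)]

theorem sigmaEH_bijOn_sym (μ κ k khat : ℝ) (hμ : 0 < μ) (hκ : 0 < κ) (hk : 0 < k)
    (hkhat : 1 / 8 < khat) :
    Set.BijOn (sigmaEH μ κ k khat)
      {A : Matrix (Fin 3) (Fin 3) ℝ | A.IsSymm}
      {A : Matrix (Fin 3) (Fin 3) ℝ | A.IsSymm} := by
  have hg_mono : StrictMono (expQuadMul κ khat (-1)) := strictMono_expQuadMul hκ (by linarith)
  have hg_surj : Surjective (expQuadMul κ khat (-1)) := surjective_expQuadMul hκ (by linarith)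
  have hdev_mono (t : ℝ) : StrictMono fun r => devProfile μ k t r * r := by
    rw [devProfile_mul_eq_expQuadMul]; exact strictMono_expQuadMul (by positivity) (by simpa)
  have hdev_surj (t : ℝ) : Surjective fun r => devProfile μ k t r * r := by
    rw [devProfile_mul_eq_expQuadMul]; exact surjective_expQuadMul (by positivity) hk
  refine ⟨fun X (hX : X.IsSymm) => ?_, fun X _ Y _ hXY => ?_, fun S (hS : S.IsSymm) => ?_⟩
  · exact show (sigmaEH μ κ k khat X).IsSymm from (hX.dev3.smul _).add (isSymm_one.smul _)
  · have htr : X.trace = Y.trace := hg_mono.injective <| by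
      have := congrArg trace hXY
      rw [trace_sigmaEH, trace_sigmaEH] at this
      linarith
    have hdev : dev3 X = dev3 Y := radialMap_injective (hdev_mono Y.trace) <| by
      simpa only [dev3_sigmaEH, htr] using congrArg dev3 hXY
    rw [← dev3_add_trace_smul_one X, ← dev3_add_trace_smul_one Y, hdev, htr]
  · obtain ⟨t, ht⟩ := hg_surj (S.trace / 3)
    obtain ⟨c, hc⟩ := exists_radialMap_smul_eq (hdev_mono t) (hdev_surj t) (dev3 S)
    have hD : (c • dev3 S).trace = 0 := by rw [trace_smul, trace_dev3, smul_zero]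
    have hXtr : (c • dev3 S + (t / 3) • 1).trace = t := by
      rw [trace_add_smul_one hD]; ring
    refine ⟨c • dev3 S + (t / 3) • 1, (hS.dev3.smul c).add (isSymm_one.smul _), ?_⟩
    rw [sigmaEH_eq_radialMap, hXtr, dev3_add_smul_one hD, hc, ht, dev3_add_trace_smul_one]
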